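/- The modified uniform rank-minimizing mechanism f^M satisfies equal treatment of equals: if a preference profile p satisfies p_a^{k′} = p_{a′}^{k′} for all k′ = 1,...,k̄(p_a), then (f^M(p))_{ao} = (f^M(p))_{a′o} for all o. -/

import Mathlib

open Finset
open scoped Classical

variable {A O : Type*}

/-- A strict preference ranking: a bijection from object types to positions. -/
abbrev Pref (O : Type*) [Fintype O] := O ≃ Fin (Fintype.card O)

/-- The rank of object `o` under ranking `p` (1 = best). -/
def rk [Fintype O] (p : Pref O) (o : O) : ℕ := (p o : ℕ) + 1

/-- A (probabilistic) assignment. -/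
def IsAssignment [Fintype A] [Fintype O] (q : O → ℕ) (x : A → O → ℝ) : Prop :=
  (∀ a o, 0 ≤ x a o ∧ x a o ≤ 1) ∧ (∀ a, ∑ o, x a o = 1) ∧ (∀ o, ∑ a, x a o ≤ (q o : ℝ))

def IsDeterministic [Fintype A] [Fintype O] (x : A → O → ℝ) : Prop :=
  ∀ a o, x a o = 0 ∨ x a o = 1

/-- The rank value (sum of expected ranks). -/
def RV [Fintype A] [Fintype O] (p : A → Pref O) (x : A → O → ℝ) : ℝ :=
  ∑ a, ∑ o, (rk (p a) o : ℝ) * x a o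

/-- `x` is a rank-minimizing assignment for profile `p`. -/
def RankMin [Fintype A] [Fintype O] (q : O → ℕ) (p : A → Pref O) (x : A → O → ℝ) : Prop :=
  IsAssignment q x ∧ ∀ y, IsAssignment q y → RV p x ≤ RV p y

/-- `x` is wasteful for profile `p`. -/
def Wasteful [Fintype A] [Fintype O] (q : O → ℕ) (p : A → Pref O) (x : A → O → ℝ) : Prop :=
  ∃ o o' a, (∑ a', x a' o) < (q o : ℝ) ∧ 0 < x a o' ∧ rk (p a) o < rk (p a) o'

/-- `k̄(p_a)`: the minimal `k` such that the types ranked at or above `k` have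
total capacity at least `|A|`. -/
noncomputable def kbar [Fintype O] (nA : ℕ) (q : O → ℕ) (p : Pref O) : ℕ :=
  sInf {k | nA ≤ ∑ o ∈ Finset.univ.filter (fun o => rk p o ≤ k), q o}

/-- A deterministic assignment, viewed as a map from agents to objects, is feasible. -/
def DetOK [Fintype A] [Fintype O] (q : O → ℕ) (d : A → O) : Prop :=
  ∀ o, (Finset.univ.filter (fun a => d a = o)).card ≤ q o

/-- The 0-1 matrix of a deterministic assignment. -/
noncomputable def detMat [Fintype A] [Fintype O] (d : A → O) : A → O → ℝ :=
  fun a o => if d a = o then 1 else 0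

/-- The set of deterministic rank-minimizing assignments for `p`
(minimizing over all probabilistic assignments). -/
noncomputable def Ystar [Fintype A] [Fintype O] (q : O → ℕ) (p : A → Pref O) :
    Finset (A → O) :=
  Finset.univ.filter
    (fun d => DetOK q d ∧ ∀ x, IsAssignment q x → RV p (detMat d) ≤ RV p x)

/-- The uniform rank-minimizing mechanism. -/
noncomputable def fU [Fintype A] [Fintype O] (q : O → ℕ) (p : A → Pref O) : A → O → ℝ :=
  fun a o => (∑ d ∈ Ystar q p, detMat d a o) / (Ystar q p).card

/-- Agent `a` (with true ranking `r`) weakly prefers `x` to `x'`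
(first-order stochastic dominance). -/
def WeakPrefAt [Fintype A] [Fintype O] (r : Pref O) (a : A) (x x' : A → O → ℝ) : Prop :=
  ∀ j : ℕ, ∑ o ∈ Finset.univ.filter (fun o => rk r o ≤ j), x' a o ≤
           ∑ o ∈ Finset.univ.filter (fun o => rk r o ≤ j), x a o

/-- Agent `a` strictly prefers `x` to `x'`. -/
def StrictPrefAt [Fintype A] [Fintype O] (r : Pref O) (a : A) (x x' : A → O → ℝ) : Prop :=
  WeakPrefAt r a x x' ∧ ∃ j : ℕ, j < Fintype.card O ∧
    ∑ o ∈ Finset.univ.filter (fun o => rk r o ≤ j), x' a o <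
    ∑ o ∈ Finset.univ.filter (fun o => rk r o ≤ j), x a o

/-- `d` is an outside option demotion strategy for true ranking `r`. -/
def ODS [Fintype O] (null : O) (r d : Pref O) : Prop :=
  (∀ o, rk r o < rk r null → rk d o = rk r o) ∧ rk d null = Fintype.card O

/-- The refusal map `g`: each agent keeps probability on truly acceptable types
and moves all remaining mass to the null type. -/
noncomputable def refuse [Fintype A] [Fintype O] (null : O) (r : A → Pref O)
    (x : A → O → ℝ) : A → O → ℝ :=
  fun a o =>
    if rk (r a) o < rk (r a) null then x a o
    else if o = null then
      ∑ o' ∈ Finset.univ.filter (fun o' => rk (r a) null ≤ rk (r a) o'), x a o'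
    else 0

/-- Equal treatment of equals for a mechanism. -/
def SatisfiesETE [Fintype A] [Fintype O] (q : O → ℕ)
    (f : (A → Pref O) → A → O → ℝ) : Prop :=
  ∀ (p : A → Pref O) (a a' : A),
    (∀ o, rk (p a) o ≤ kbar (Fintype.card A) q (p a) → p a' o = p a o) →
    ∀ o, f p a o = f p a' o

/-- Condition (ii) of the modified mechanism: `b` is one of the `q_o` agents who
rank `∅` at position `l`, agree with `a` above `l`, and have `k̄ = l`. -/
def InGroup [Fintype A] [Fintype O] (q : O → ℕ) (null : O) (p : A → Pref O)
    (a : A) (l : ℕ) (b : A) : Prop :=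
  b ≠ a ∧ rk (p b) null = l ∧
    (∀ o, rk (p b) o < l → rk (p a) o = rk (p b) o) ∧ kbar (Fintype.card A) q (p b) = l

/-- The exceptional profiles (conditions (i)–(iii)) of the modified mechanism. -/
def Exc [Fintype A] [Fintype O] (q : O → ℕ) (null : O) (p : A → Pref O)
    (a : A) (o : O) (l : ℕ) : Prop :=
  rk (p a) o = 1 ∧ 3 ≤ rk (p a) null ∧ 2 ≤ l ∧ l < rk (p a) null ∧
  (Finset.univ.filter (InGroup q null p a l)).card = q o ∧
  (∀ b, b ≠ a → ¬ InGroup q null p a l b → rk (p b) null = 1)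

/-- The modified uniform rank-minimizing mechanism. -/
noncomputable def fM [Fintype A] [Fintype O] (q : O → ℕ) (null : O)
    (p : A → Pref O) : A → O → ℝ :=
  if h : ∃ w : A × O × ℕ, Exc q null p w.1 w.2.1 w.2.2 then
    fun b o' =>
      if b = h.choose.1 then (if rk (p b) o' = 2 then 1 else 0)
      else if InGroup q null p h.choose.1 h.choose.2.2 b then
        (if o' = h.choose.2.1 then 1 else 0)
      else (if o' = null then 1 else 0)
  else fU q p

/-!
Outside the exceptional profiles `fM` is the uniform mechanism `fU`, which is symmetric in two
equal agents `a`, `a'`: in every rank-minimizing deterministic assignment each agent receives one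
of its top `k̄` types (otherwise it could move to a type among them with spare capacity and lower
the rank value), and on those types the rankings of `a` and `a'` agree, so exchanging the
allotments of `a` and `a'` permutes the rank-minimizing deterministic assignments.
On an exceptional profile every agent other than the distinguished one ranks `∅` within its top
`k̄`, strictly above where the distinguished agent ranks it, so an equal of the distinguished agent
is that agent itself; and membership in the group depends only on `k̄` and the ranking down to
`k̄`, which equal agents share.
-/

section Ranks

variable [Fintype O]

lemma one_le_rk (r : Pref O) (o : O) : 1 ≤ rk r o := Nat.le_add_left 1 _

lemma rk_le_card (r : Pref O) (o : O) : rk r o ≤ Fintype.card O := (r o).isLt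

lemma rk_injective (r : Pref O) : Function.Injective (rk r) := fun _ _ h =>
  r.injective (Fin.ext (Nat.succ_injective h))

lemma exists_rk_eq (r : Pref O) {j : ℕ} (h1 : 1 ≤ j) (h2 : j ≤ Fintype.card O) :
    ∃ o, rk r o = j :=
  ⟨r.symm ⟨j - 1, by omega⟩, by simp only [rk, Equiv.apply_symm_apply]; omega⟩

lemma rk_congr {r r' : Pref O} {o : O} (h : r' o = r o) : rk r' o = rk r o := by
  rw [rk, rk, h]

lemma rk_le_iff_of_agree {r r' : Pref O} {K k : ℕ} (h : ∀ o, rk r o ≤ K → r' o = r o)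
    (hk : k ≤ K) (o : O) : rk r' o ≤ k ↔ rk r o ≤ k := by
  refine ⟨fun ho => ?_, fun ho => (rk_congr (h o (ho.trans hk))).trans_le ho⟩
  obtain ⟨o', ho'⟩ := exists_rk_eq r (one_le_rk r' o) (rk_le_card r' o)
  have hr' : rk r' o' = rk r o' := rk_congr (h o' (by omega))
  rw [rk_injective r' (hr'.trans ho')] at ho'
  omega

end Ranks

section Kbar

variable [Fintype O] {nA : ℕ} {q : O → ℕ}

lemma le_sum_filter_rk_le_kbar (hq : nA ≤ ∑ o, q o) (r : Pref O) :
    nA ≤ ∑ o ∈ univ.filter (fun o => rk r o ≤ kbar nA q r), q o := by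
  refine Nat.sInf_mem (s := {k | nA ≤ ∑ o ∈ univ.filter (fun o => rk r o ≤ k), q o})
    ⟨Fintype.card O, ?_⟩
  simpa only [Set.mem_ofPred_eq, rk_le_card, filter_true] using hq

lemma kbar_le_of_le_sum {r : Pref O} {k : ℕ}
    (h : nA ≤ ∑ o ∈ univ.filter (fun o => rk r o ≤ k), q o) : kbar nA q r ≤ k :=
  Nat.sInf_le h

lemma one_le_kbar (hq : nA ≤ ∑ o, q o) (hA : 0 < nA) (r : Pref O) : 1 ≤ kbar nA q r := by
  by_contra! h0
  have h := le_sum_filter_rk_le_kbar hq r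
  rw [Nat.lt_one_iff.mp h0,
    filter_false_of_mem (p := fun o => rk r o ≤ 0) fun o _ => Nat.not_succ_le_zero _,
    sum_empty] at h
  omega

lemma kbar_eq_of_agree (hq : nA ≤ ∑ o, q o) {r r' : Pref O}
    (h : ∀ o, rk r o ≤ kbar nA q r → r' o = r o) : kbar nA q r' = kbar nA q r := by
  have hle : kbar nA q r' ≤ kbar nA q r := by
    apply kbar_le_of_le_sum
    simpa only [rk_le_iff_of_agree h le_rfl] using le_sum_filter_rk_le_kbar hq r
  refine le_antisymm hle (kbar_le_of_le_sum ?_)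
  simpa only [rk_le_iff_of_agree h hle] using le_sum_filter_rk_le_kbar hq r'

lemma kbar_agree_symm (hq : nA ≤ ∑ o, q o) {r r' : Pref O}
    (h : ∀ o, rk r o ≤ kbar nA q r → r' o = r o) :
    ∀ o, rk r' o ≤ kbar nA q r' → r o = r' o := fun o ho =>
  (h o ((rk_le_iff_of_agree h le_rfl o).mp (kbar_eq_of_agree hq h ▸ ho))).symm

end Kbar

section RankMinimizing

variable [Fintype A] [Fintype O] {q : O → ℕ} {p : A → Pref O}

lemma RV_detMat (p : A → Pref O) (d : A → O) :
    RV p (detMat d) = ∑ b, (rk (p b) (d b) : ℝ) := by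
  refine sum_congr rfl fun b _ => ?_
  simp [detMat]

lemma DetOK.isAssignment {d : A → O} (hd : DetOK q d) : IsAssignment q (detMat d) := by
  refine ⟨fun a o => by unfold detMat; split <;> norm_num, fun a => by simp [detMat],
    fun o => ?_⟩
  simpa [detMat, sum_boole] using hd o

lemma DetOK.update {d : A → O} (hd : DetOK q d) {o : O}
    (ho : (univ.filter fun a => d a = o).card < q o) (b : A) :
    DetOK q (Function.update d b o) := by
  intro o'
  have hsub : univ.filter (fun c => Function.update d b o c = o')
      ⊆ insert b (univ.filter fun c => d c = o') := by
    intro c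
    by_cases hcb : c = b <;> simp [hcb, Function.update_apply]
  rcases eq_or_ne o' o with rfl | ho'
  · exact (card_le_card hsub).trans ((card_insert_le _ _).trans ho)
  · refine (card_le_card fun c hc => ?_).trans (hd o')
    rcases mem_insert.mp (hsub hc) with rfl | hc'
    · simp [ho'.symm] at hc
    · exact hc'

lemma DetOK.comp_perm {d : A → O} (hd : DetOK q d) (σ : Equiv.Perm A) : DetOK q (d ∘ σ) := by
  intro o
  refine le_of_eq_of_le (card_bij' (fun c _ => σ c) (fun c _ => σ.symm c) ?_ ?_ ?_ ?_) (hd o) <;>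
    simp

lemma exists_card_lt_of_rk_lt {d : A → O} {r : Pref O} {k : ℕ} {b : A}
    (hcap : Fintype.card A ≤ ∑ o ∈ univ.filter (fun o => rk r o ≤ k), q o)
    (hb : k < rk r (d b)) :
    ∃ o, rk r o ≤ k ∧ (univ.filter fun a => d a = o).card < q o := by
  set S := univ.filter (fun o => rk r o ≤ k)
  have hocc : (univ.filter fun a => d a ∈ S).card < Fintype.card A := by
    refine card_lt_card ⟨subset_univ _, fun h => ?_⟩
    exact hb.not_ge (by simpa [S] using h (mem_univ b))
  rw [← sum_card_fiberwise_eq_card_filter] at hocc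
  obtain ⟨o, hoS, ho⟩ := exists_lt_of_sum_lt (hocc.trans_le hcap)
  exact ⟨o, (mem_filter.mp hoS).2, ho⟩

lemma mem_Ystar {d : A → O} :
    d ∈ Ystar q p ↔ DetOK q d ∧ ∀ x, IsAssignment q x → RV p (detMat d) ≤ RV p x := by
  simp [Ystar]

lemma rk_le_kbar_of_mem_Ystar (hq : Fintype.card A ≤ ∑ o, q o) {d : A → O}
    (hd : d ∈ Ystar q p) (b : A) : rk (p b) (d b) ≤ kbar (Fintype.card A) q (p b) := by
  by_contra! hlt
  obtain ⟨hdet, hmin⟩ := mem_Ystar.mp hd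
  obtain ⟨o, hok, hfree⟩ := exists_card_lt_of_rk_lt (le_sum_filter_rk_le_kbar hq (p b)) hlt
  have hle := hmin _ (hdet.update hfree b).isAssignment
  rw [RV_detMat, RV_detMat] at hle
  refine hle.not_gt (sum_lt_sum (fun c _ => ?_) ⟨b, mem_univ b, ?_⟩)
  · rcases eq_or_ne c b with rfl | hcb
    · simp only [Function.update_self, Nat.cast_le]; omega
    · rw [Function.update_of_ne hcb]
  · simp only [Function.update_self, Nat.cast_lt]; omega

lemma comp_perm_mem_Ystar {d : A → O} (hd : d ∈ Ystar q p) (σ : Equiv.Perm A)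
    (hσ : ∀ c, rk (p (σ.symm c)) (d c) = rk (p c) (d c)) : d ∘ σ ∈ Ystar q p := by
  obtain ⟨hdet, hmin⟩ := mem_Ystar.mp hd
  have hRV : RV p (detMat (d ∘ σ)) = RV p (detMat d) := by
    rw [RV_detMat, RV_detMat, ← Equiv.sum_comp σ.symm]
    simp [hσ]
  exact mem_Ystar.mpr ⟨hdet.comp_perm σ, fun x hx => hRV ▸ hmin x hx⟩

lemma fU_satisfiesETE (hq : Fintype.card A ≤ ∑ o, q o) : SatisfiesETE q (fU (A := A) q) := by
  intro p a a' h o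
  have hswap : ∀ d ∈ Ystar q p, d ∘ Equiv.swap a a' ∈ Ystar q p := fun d hd =>
    comp_perm_mem_Ystar hd _ fun c => by
      rw [Equiv.symm_swap]
      rcases eq_or_ne c a with rfl | hca
      · rw [Equiv.swap_apply_left, rk_congr (h _ (rk_le_kbar_of_mem_Ystar hq hd c))]
      rcases eq_or_ne c a' with rfl | hca'
      · rw [Equiv.swap_apply_right,
          rk_congr (kbar_agree_symm hq h _ (rk_le_kbar_of_mem_Ystar hq hd c))]
      · rw [Equiv.swap_apply_of_ne_of_ne hca hca']
  unfold fU
  congr 1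
  exact sum_nbij' (· ∘ Equiv.swap a a') (· ∘ Equiv.swap a a') hswap hswap
    (fun d _ => by ext; simp) (fun d _ => by ext; simp) (fun d _ => by simp [detMat])

end RankMinimizing

section Exceptional

variable [Fintype A] [Fintype O] {q : O → ℕ} {null : O} {p : A → Pref O} {l : ℕ}

lemma Exc.eq_of_agree {a₀ : A} {o₀ : O} (hE : Exc q null p a₀ o₀ l)
    (hq : Fintype.card A ≤ ∑ o, q o) {b : A}
    (h : ∀ o, rk (p b) o ≤ kbar (Fintype.card A) q (p b) → p a₀ o = p b o) : b = a₀ := by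
  obtain ⟨-, h3, -, hl, -, hrest⟩ := hE
  by_contra hb
  have hrk : rk (p b) null ≤ kbar (Fintype.card A) q (p b) ∧
      rk (p b) null < rk (p a₀) null := by
    by_cases hg : InGroup q null p a₀ l b
    · obtain ⟨-, hbl, -, hkl⟩ := hg
      omega
    · have h1 := hrest b hb hg
      have := one_le_kbar hq (Fintype.card_pos_iff.mpr ⟨b⟩) (p b)
      omega
  exact hrk.2.ne' (rk_congr (h null hrk.1))

lemma InGroup.of_agree (hq : Fintype.card A ≤ ∑ o, q o) {a₀ b b' : A}
    (hb : InGroup q null p a₀ l b) (hb' : b' ≠ a₀)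
    (h : ∀ o, rk (p b) o ≤ kbar (Fintype.card A) q (p b) → p b' o = p b o) :
    InGroup q null p a₀ l b' := by
  obtain ⟨-, hbl, hab, hkl⟩ := hb
  have hk' : kbar (Fintype.card A) q (p b') = l := (kbar_eq_of_agree hq h).trans hkl
  refine ⟨hb', (rk_congr (h null (by omega))).trans hbl, fun o ho => ?_, hk'⟩
  have hrk := rk_congr (kbar_agree_symm hq h o (by omega))
  exact (hab o (by omega)).trans hrk

lemma fM_satisfiesETE (hq : Fintype.card A ≤ ∑ o, q o) :
    SatisfiesETE q (fM (A := A) q null) := by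
  intro p a a' h o
  by_cases hE : ∃ w : A × O × ℕ, Exc q null p w.1 w.2.1 w.2.2
  · have hw := hE.choose_spec
    rw [fM, dif_pos hE]
    by_cases ha : a = hE.choose.1
    · rw [ha, hw.eq_of_agree hq (b := a') (ha ▸ kbar_agree_symm hq h)]
    have ha' : a' ≠ hE.choose.1 := fun ha' => ha (hw.eq_of_agree hq (ha' ▸ h))
    have hg : InGroup q null p hE.choose.1 hE.choose.2.2 a ↔
        InGroup q null p hE.choose.1 hE.choose.2.2 a' :=
      ⟨fun hg => hg.of_agree hq ha' h, fun hg => hg.of_agree hq ha (kbar_agree_symm hq h)⟩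
    simp only [if_neg ha, if_neg ha', hg]
  · rw [fM, dif_neg hE]
    exact fU_satisfiesETE hq p a a' h o

end Exceptional

theorem stmt17_general [Fintype A] [Fintype O]
    (q : O → ℕ) (null : O) (hnull : Fintype.card A ≤ q null)
    (p : A → Pref O) (a a' : A)
    (h : ∀ o, rk (p a) o ≤ kbar (Fintype.card A) q (p a) → p a' o = p a o) :
    ∀ o, fM q null p a o = fM q null p a' o :=
  fM_satisfiesETE (hnull.trans (single_le_sum (fun _ _ => Nat.zero_le _) (mem_univ null)))
    p a a' h

/-- Proposition 4: the modified uniform rank-minimizing mechanism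
satisfies equal treatment of equals. -/
theorem stmt17 [Fintype A] [Fintype O]
    (hA : 2 ≤ Fintype.card A) (hO : 3 ≤ Fintype.card O)
    (q : O → ℕ) (null : O) (hnull : Fintype.card A ≤ q null)
    (p : A → Pref O) (a a' : A)
    (h : ∀ o, rk (p a) o ≤ kbar (Fintype.card A) q (p a) → p a' o = p a o) :
    ∀ o, fM q null p a o = fM q null p a' o :=
  stmt17_general q null hnull p a a' h
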